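/- Let ε > 0 and let Φ : V → W be a linear map between inner product spaces with dim V = dim W = m, such that ‖Φv₁ ∧ Φv₂‖ ≤ ε‖v₁ ∧ v₂‖ for all v₁, v₂ ∈ V (area ε-decreasing). Then |det Φ| ≤ ε^{m/2} when m is even, and more generally |det Φ| ≤ ε^{⌊m/2⌋}·‖Φ‖ for odd m, where ‖Φ‖ is the operator norm. In particular, if ε < 1 and ‖Φ‖ ≤ 1 then |det Φ| < 1. -/

import Mathlib

/-! For an orthonormal eigenbasis `bᵢ` of `f† f`, the images `f bᵢ` are pairwise orthogonal with
lengths the singular values `σᵢ`. The wedge hypothesis on the pair `bᵢ, bⱼ` thus reads `σᵢ σⱼ ≤ ε`,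
and `σᵢ ≤ ‖f‖`. As `|det f| = ∏ σᵢ`, grouping the factors in pairs bounds it by
`ε ^ (m / 2) * ‖f‖ ^ (m % 2)`. -/

noncomputable def wedgeNorm {V : Type*} [NormedAddCommGroup V] [InnerProductSpace ℝ V]
    (v w : V) : ℝ :=
  Real.sqrt (‖v‖ ^ 2 * ‖w‖ ^ 2 - (inner ℝ v w : ℝ) ^ 2)

open Module

theorem wedgeNorm_of_inner_eq_zero {V : Type*} [NormedAddCommGroup V] [InnerProductSpace ℝ V]
    {v w : V} (h : inner ℝ v w = 0) : wedgeNorm v w = ‖v‖ * ‖w‖ := by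
  rw [wedgeNorm, h, zero_pow two_ne_zero, sub_zero, ← mul_pow,
    Real.sqrt_sq (by positivity)]

theorem Fin.prod_le_of_pairwise_mul_le {R : Type*} [CommSemiring R] [PartialOrder R]
    [IsOrderedRing R] {c N : R} :
    ∀ {m : ℕ} {a : Fin m → R}, (∀ i, 0 ≤ a i) → Pairwise (fun i j ↦ a i * a j ≤ c) →
      (∀ i, a i ≤ N) → ∏ i, a i ≤ c ^ (m / 2) * N ^ (m % 2)
  | 0, _, _, _, _ => by simp
  | 1, a, _, _, haN => by simpa using haN 0
  | m + 2, a, ha, hpair, haN => by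
    have hpair₀₁ : a 0 * a 1 ≤ c := hpair (by simp)
    have ih : ∏ i : Fin m, a i.succ.succ ≤ c ^ (m / 2) * N ^ (m % 2) :=
      prod_le_of_pairwise_mul_le (fun i ↦ ha _)
        (fun i j hij ↦ hpair (by simpa using hij)) (fun i ↦ haN _)
    rw [Fin.prod_univ_succ, Fin.prod_univ_succ, ← mul_assoc,
      show (m + 2) / 2 = m / 2 + 1 by omega, show (m + 2) % 2 = m % 2 by omega, pow_succ]
    calc a 0 * a 1 * ∏ i : Fin m, a i.succ.succ ≤ c * (c ^ (m / 2) * N ^ (m % 2)) :=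
          mul_le_mul hpair₀₁ ih (Finset.prod_nonneg fun i _ ↦ ha _)
            ((mul_nonneg (ha 0) (ha 1)).trans hpair₀₁)
      _ = c ^ (m / 2) * c * N ^ (m % 2) := by ring

namespace LinearMap

variable {𝕜 E F : Type*} [RCLike 𝕜] [NormedAddCommGroup E] [InnerProductSpace 𝕜 E]
  [FiniteDimensional 𝕜 E] [NormedAddCommGroup F] [InnerProductSpace 𝕜 F] [FiniteDimensional 𝕜 F]
  (T : E →ₗ[𝕜] F) {n : ℕ} (hn : finrank 𝕜 E = n)

local notation "b" => T.isSymmetric_adjoint_comp_self.eigenvectorBasis hn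

theorem inner_apply_eigenvectorBasis_adjoint_comp_self (i j : Fin n) :
    inner 𝕜 (T (b i)) (T (b j)) =
      (T.isSymmetric_adjoint_comp_self.eigenvalues hn i : 𝕜) * inner 𝕜 (b i) (b j) := by
  rw [← adjoint_inner_left, ← comp_apply, T.isSymmetric_adjoint_comp_self.apply_eigenvectorBasis,
    inner_smul_left, RCLike.conj_ofReal]

theorem inner_apply_eigenvectorBasis_adjoint_comp_self_eq_zero {i j : Fin n} (hij : i ≠ j) :
    inner 𝕜 (T (b i)) (T (b j)) = 0 := by
  rw [inner_apply_eigenvectorBasis_adjoint_comp_self, (b).orthonormal.2 hij, mul_zero]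

theorem norm_apply_eigenvectorBasis_adjoint_comp_self (i : Fin n) :
    ‖T (b i)‖ = T.singularValues i := by
  rw [← sq_eq_sq₀ (norm_nonneg _) (T.singularValues_nonneg _), T.sq_singularValues_fin hn,
    ← RCLike.ofReal_inj (K := 𝕜), RCLike.ofReal_pow, ← inner_self_eq_norm_sq_to_K,
    inner_apply_eigenvectorBasis_adjoint_comp_self, inner_self_eq_norm_sq_to_K,
    (b).norm_eq_one i]
  simp

end LinearMap

open LinearMap in
theorem ContinuousLinearMap.normDet_le_of_wedgeNorm_le {U V : Type*} [NormedAddCommGroup U]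
    [InnerProductSpace ℝ U] [FiniteDimensional ℝ U] [NormedAddCommGroup V] [InnerProductSpace ℝ V]
    [FiniteDimensional ℝ V] (f : U →L[ℝ] V) {ε : ℝ}
    (h : ∀ v w : U, wedgeNorm (f v) (f w) ≤ ε * wedgeNorm v w) :
    (f : U →ₗ[ℝ] V).normDet ≤ ε ^ (finrank ℝ U / 2) * ‖f‖ ^ (finrank ℝ U % 2) := by
  set T : U →ₗ[ℝ] V := f.toLinearMap
  set b := T.isSymmetric_adjoint_comp_self.eigenvectorBasis rfl
  rw [normDet_eq_prod_singularValues, ← Fin.prod_univ_eq_prod_range]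
  refine Fin.prod_le_of_pairwise_mul_le (fun i ↦ T.singularValues_nonneg _) (fun i j hij ↦ ?_)
    (fun i ↦ ?_)
  · calc T.singularValues i * T.singularValues j = wedgeNorm (T (b i)) (T (b j)) := by
          rw [wedgeNorm_of_inner_eq_zero (T.inner_apply_eigenvectorBasis_adjoint_comp_self_eq_zero
            rfl hij), T.norm_apply_eigenvectorBasis_adjoint_comp_self,
            T.norm_apply_eigenvectorBasis_adjoint_comp_self]
      _ ≤ ε * wedgeNorm (b i) (b j) := h _ _
      _ = ε := by
          rw [wedgeNorm_of_inner_eq_zero (b.orthonormal.2 hij), b.norm_eq_one, b.norm_eq_one,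
            mul_one, mul_one]
  · rw [← T.norm_apply_eigenvectorBasis_adjoint_comp_self rfl]
    exact (f.le_opNorm (b i)).trans_eq (by rw [b.norm_eq_one, mul_one])

theorem stmt19 {V : Type*} [NormedAddCommGroup V] [InnerProductSpace ℝ V]
    [FiniteDimensional ℝ V] (m : ℕ) (hm : Module.finrank ℝ V = m)
    (Φ : V →L[ℝ] V) (ε : ℝ) (hε : 0 < ε)
    (h : ∀ v₁ v₂ : V, wedgeNorm (Φ v₁) (Φ v₂) ≤ ε * wedgeNorm v₁ v₂) :
    (Even m → |LinearMap.det (Φ : V →ₗ[ℝ] V)| ≤ ε ^ (m / 2)) ∧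
    |LinearMap.det (Φ : V →ₗ[ℝ] V)| ≤ ε ^ (m / 2) * ‖Φ‖ ^ (m % 2) ∧
    (ε < 1 → ‖Φ‖ ≤ 1 → 2 ≤ m → |LinearMap.det (Φ : V →ₗ[ℝ] V)| < 1) := by
  have hdet : |LinearMap.det (Φ : V →ₗ[ℝ] V)| ≤ ε ^ (m / 2) * ‖Φ‖ ^ (m % 2) := by
    rw [← LinearMap.normDet_eq_abs_det, ← hm]
    exact Φ.normDet_le_of_wedgeNorm_le h
  refine ⟨fun hm_even ↦ ?_, hdet, fun hε_lt_one hΦ_le_one hm_two ↦ ?_⟩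
  · simpa [Nat.even_iff.mp hm_even] using hdet
  · calc |LinearMap.det (Φ : V →ₗ[ℝ] V)| ≤ ε ^ (m / 2) * ‖Φ‖ ^ (m % 2) := hdet
      _ ≤ ε ^ (m / 2) :=
          mul_le_of_le_one_right (by positivity) (pow_le_one₀ (by positivity) hΦ_le_one)
      _ < 1 := pow_lt_one₀ hε.le hε_lt_one (by omega)
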